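/- arXiv:2201.07855 — 4 statements merged into one kernel-verified Lean document; each statement's English description precedes it below -/
import Mathlib

section
/- Suppose service rates are decomposable with all pairs being activities, I ≥ 2 and K ≥ 2, and let ξ* be the allocation ξ*_{(i,k)} = λ_i/α_i, which satisfies R ξ* = λ and G ξ* = 1_K. Define δ ∈ ℝ^{I·K} by δ_{(i,k)} = (−1)^{i+k}/β_k if i ≤ 2 and k ≤ 2, and δ_{(i,k)} = 0 otherwise. Then R δ = 0 and G δ = 0, and consequently for sufficiently small ε > 0, ξ* + ε δ is a distinct nonnegative solution of R ξ = λ, G ξ = 1_K: the linear program has multiple solutions. -/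
/-!
On the block of the first two classes and the first two servers, δ has alternating signs, scaled by 1/β_k so
that each row of R δ reduces to α_i((-1)^i + (-1)^(i+1)) and each column of G δ to
((-1)^k + (-1)^(k+1))/β_k; both vanish. Hence ξ* + ε δ solves the same linear system for every ε, and
since ξ* is strictly positive on a finite index set, it stays nonnegative for small ε > 0.
-/

open Finset Filter Topology

lemma exists_pos_forall_nonneg_add_mul {ι : Type*} [Finite ι] {ξ : ι → ℝ} (hξ : ∀ p, 0 < ξ p)
    (δ : ι → ℝ) : ∃ ε > 0, ∀ p, 0 ≤ ξ p + ε * δ p := by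
  have hpos : ∀ᶠ ε in 𝓝[>] (0 : ℝ), ∀ p, 0 < ξ p + ε * δ p := by
    refine eventually_all.2 fun p => nhdsWithin_le_nhds ?_
    have hcont : Continuous fun ε : ℝ => ξ p + ε * δ p := by fun_prop
    exact hcont.tendsto' 0 _ (by simp) |>.eventually (lt_mem_nhds (hξ p))
  obtain ⟨ε, hε, hε'⟩ := (hpos.and self_mem_nhdsWithin).exists
  exact ⟨ε, hε', fun p => (hε p).le⟩

lemma Fin.sum_ite_val_lt_two {M : Type*} [AddCommMonoid M] {n : ℕ} (hn : 2 ≤ n)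
    (g : Fin n → M) :
    ∑ k : Fin n, (if k.val < 2 then g k else 0) = g ⟨0, by omega⟩ + g ⟨1, by omega⟩ := by
  rw [← sum_filter]
  have hfilter : univ.filter (fun k : Fin n => k.val < 2) = {⟨0, by omega⟩, ⟨1, by omega⟩} := by
    ext k
    simp only [mem_filter, mem_univ, true_and, mem_insert, mem_singleton, Fin.ext_iff]
    omega
  rw [hfilter, sum_pair (by simp [Fin.ext_iff])]

lemma sum_ite_val_lt_two_neg_one_pow_mul {n : ℕ} (hn : 2 ≤ n) (m : ℕ) (c : ℝ) :
    ∑ k : Fin n, (if k.val < 2 then (-1 : ℝ) ^ (m + k.val) * c else 0) = 0 := by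
  rw [Fin.sum_ite_val_lt_two hn]
  simp only [add_zero, pow_succ]
  ring

lemma sum_mul_add_mul_eq {ι : Type*} (s : Finset ι) {c x d : ι → ℝ} {b : ℝ}
    (hx : ∑ k ∈ s, c k * x k = b) (hd : ∑ k ∈ s, c k * d k = 0) (ε : ℝ) :
    ∑ k ∈ s, c k * (x k + ε * d k) = b := by
  simp only [mul_add, sum_add_distrib, mul_left_comm _ ε, ← mul_sum, hx, hd, mul_zero, add_zero]

theorem stmt_3_general {I K : ℕ} (hI : 2 ≤ I) (hK : 2 ≤ K)
    (α : Fin I → ℝ) (β : Fin K → ℝ) (lam : Fin I → ℝ)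
    (hα : ∀ i, 0 < α i) (hβ : ∀ k, 0 < β k) (hlam : ∀ i, 0 < lam i)
    (ξstar : Fin I × Fin K → ℝ)
    (hξstar : ∀ p, ξstar p = lam p.1 / α p.1)
    (hRξ : ∀ i, ∑ k, α i * β k * ξstar (i, k) = lam i)
    (hGξ : ∀ k, ∑ i, ξstar (i, k) = 1)
    (δ : Fin I × Fin K → ℝ)
    (hδ : ∀ p : Fin I × Fin K,
      δ p = if p.1.val < 2 ∧ p.2.val < 2 then (-1 : ℝ) ^ (p.1.val + p.2.val) / β p.2 else 0) :
    (∀ i, ∑ k, α i * β k * δ (i, k) = 0) ∧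
    (∀ k, ∑ i, δ (i, k) = 0) ∧
    (∃ ε : ℝ, 0 < ε ∧
      (fun p => ξstar p + ε * δ p) ≠ ξstar ∧
      (∀ p, 0 ≤ ξstar p + ε * δ p) ∧
      (∀ i, ∑ k, α i * β k * (ξstar (i, k) + ε * δ (i, k)) = lam i) ∧
      (∀ k, ∑ i, (ξstar (i, k) + ε * δ (i, k)) = 1)) := by
  have hR (i : Fin I) : ∑ k, α i * β k * δ (i, k) = 0 := by
    have hterm (k : Fin K) : α i * β k * δ (i, k) =
        if k.val < 2 then (-1 : ℝ) ^ (i.val + k.val) * (if i.val < 2 then α i else 0) else 0 := by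
      rw [hδ]
      by_cases hi : i.val < 2 <;> by_cases hk : k.val < 2 <;> simp [hi, hk]
      field_simp [(hβ k).ne']
    simp only [hterm, sum_ite_val_lt_two_neg_one_pow_mul hK]
  have hG (k : Fin K) : ∑ i, δ (i, k) = 0 := by
    have hterm (i : Fin I) : δ (i, k) =
        if i.val < 2 then (-1 : ℝ) ^ (k.val + i.val) * (if k.val < 2 then (β k)⁻¹ else 0) else 0 := by
      rw [hδ, add_comm k.val]
      split_ifs <;> simp_all [div_eq_mul_inv]
    simp only [hterm, sum_ite_val_lt_two_neg_one_pow_mul hI]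
  have hξpos (p : Fin I × Fin K) : 0 < ξstar p := hξstar p ▸ div_pos (hlam p.1) (hα p.1)
  obtain ⟨ε, hε, hnonneg⟩ := exists_pos_forall_nonneg_add_mul hξpos δ
  have hδ₀₀ : δ (⟨0, by omega⟩, ⟨0, by omega⟩) ≠ 0 := by
    simp [hδ, (hβ _).ne']
  refine ⟨hR, hG, ε, hε, fun h => ?_, hnonneg, fun i => ?_, fun k => ?_⟩
  · simpa [hε.ne', hδ₀₀] using congrFun h (⟨0, by omega⟩, ⟨0, by omega⟩)
  · exact sum_mul_add_mul_eq _ (hRξ i) (hR i) ε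
  · simpa using sum_mul_add_mul_eq (c := 1) _ (by simpa using hGξ k) (by simpa using hG k) ε

/-- Under decomposability with all pairs being activities, the perturbation δ satisfies
R δ = 0 and G δ = 0, so ξ* + ε δ is a distinct nonnegative solution for small ε > 0:
the LP has multiple solutions. -/
theorem stmt_3 {I K : ℕ} (hI : 2 ≤ I) (hK : 2 ≤ K)
    (α : Fin I → ℝ) (β : Fin K → ℝ) (lam : Fin I → ℝ)
    (hα : ∀ i, 0 < α i) (hβ : ∀ k, 0 < β k) (hlam : ∀ i, 0 < lam i)
    (hβsum : ∑ k, β k = 1) (hnorm : ∑ i, lam i / α i = 1)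
    (ξstar : Fin I × Fin K → ℝ)
    (hξstar : ∀ p, ξstar p = lam p.1 / α p.1)
    (hRξ : ∀ i, ∑ k, α i * β k * ξstar (i, k) = lam i)
    (hGξ : ∀ k, ∑ i, ξstar (i, k) = 1)
    (δ : Fin I × Fin K → ℝ)
    (hδ : ∀ p : Fin I × Fin K,
      δ p = if p.1.val < 2 ∧ p.2.val < 2 then (-1 : ℝ) ^ (p.1.val + p.2.val) / β p.2 else 0) :
    (∀ i, ∑ k, α i * β k * δ (i, k) = 0) ∧
    (∀ k, ∑ i, δ (i, k) = 0) ∧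
    (∃ ε : ℝ, 0 < ε ∧
      (fun p => ξstar p + ε * δ p) ≠ ξstar ∧
      (∀ p, 0 ≤ ξstar p + ε * δ p) ∧
      (∀ i, ∑ k, α i * β k * (ξstar (i, k) + ε * δ (i, k)) = lam i) ∧
      (∀ k, ∑ i, (ξstar (i, k) + ε * δ (i, k)) = 1)) :=
  stmt_3_general hI hK α β lam hα hβ hlam ξstar hξstar hRξ hGξ δ hδ
end

section
/- For a 2-class, 2-server system with all four activities, if there exist two distinct nonnegative solutions ξ^(1), ξ^(2) to R ξ = λ with (G ξ^(p))_k = 1 for both servers k and p = 1,2, then the service rates are decomposable, i.e., μ_{11}/μ_{12} = μ_{21}/μ_{22} (equivalently (μ_{21}, μ_{22}) = c (μ_{11}, μ_{12}) for some c > 0). -/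
/-! Since both allocations fill each server, the second row of `ξ₁ - ξ₂` is the negative of the
first, so the first row is a nonzero kernel vector of the rate matrix `μ`. Hence `det μ = 0`,
and with positive rates this says the rows of `μ` are proportional. -/

section Allocations

variable {μ : Fin 2 → Fin 2 → ℝ} {lam : Fin 2 → ℝ} {ξ₁ ξ₂ : Fin 2 → Fin 2 → ℝ}

theorem sub_apply_one_eq_neg (hG₁ : ∀ k, ξ₁ 0 k + ξ₁ 1 k = 1) (hG₂ : ∀ k, ξ₂ 0 k + ξ₂ 1 k = 1) :
    ξ₁ 1 - ξ₂ 1 = -(ξ₁ 0 - ξ₂ 0) := by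
  funext k
  simp only [Pi.sub_apply, Pi.neg_apply]
  linarith [hG₁ k, hG₂ k]

theorem sub_apply_zero_ne_zero (hG₁ : ∀ k, ξ₁ 0 k + ξ₁ 1 k = 1)
    (hG₂ : ∀ k, ξ₂ 0 k + ξ₂ 1 k = 1) (hne : ξ₁ ≠ ξ₂) :
    ξ₁ 0 - ξ₂ 0 ≠ 0 := by
  intro h
  have h₁ : ξ₁ 1 - ξ₂ 1 = 0 := by rw [sub_apply_one_eq_neg hG₁ hG₂, h, neg_zero]
  apply hne
  funext i
  fin_cases i
  · exact sub_eq_zero.mp h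
  · exact sub_eq_zero.mp h₁

theorem mulVec_sub_apply_zero_eq_zero
    (hR₁ : ∀ i, μ i 0 * ξ₁ i 0 + μ i 1 * ξ₁ i 1 = lam i)
    (hR₂ : ∀ i, μ i 0 * ξ₂ i 0 + μ i 1 * ξ₂ i 1 = lam i)
    (hG₁ : ∀ k, ξ₁ 0 k + ξ₁ 1 k = 1) (hG₂ : ∀ k, ξ₂ 0 k + ξ₂ 1 k = 1) :
    (Matrix.of μ).mulVec (ξ₁ 0 - ξ₂ 0) = 0 := by
  have hrow₁ := congrFun (sub_apply_one_eq_neg hG₁ hG₂)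
  simp only [Pi.sub_apply, Pi.neg_apply] at hrow₁
  refine funext (Fin.forall_fin_two.mpr ⟨?_, ?_⟩) <;>
    simp only [Matrix.mulVec, dotProduct, Fin.sum_univ_two, Matrix.of_apply, Pi.sub_apply,
      Pi.zero_apply]
  · linear_combination hR₁ 0 - hR₂ 0
  · linear_combination hR₂ 1 - hR₁ 1 + μ 1 0 * hrow₁ 0 + μ 1 1 * hrow₁ 1

end Allocations

theorem decomposable_of_det_eq_zero {μ : Fin 2 → Fin 2 → ℝ} (h01 : 0 < μ 0 1) (h11 : 0 < μ 1 1)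
    (hdet : (Matrix.of μ).det = 0) :
    μ 0 0 / μ 0 1 = μ 1 0 / μ 1 1 ∧
      ∃ c : ℝ, 0 < c ∧ μ 1 0 = c * μ 0 0 ∧ μ 1 1 = c * μ 0 1 := by
  rw [Matrix.det_fin_two] at hdet
  simp only [Matrix.of_apply] at hdet
  refine ⟨?_, μ 1 1 / μ 0 1, div_pos h11 h01, ?_, ?_⟩
  · rw [div_eq_div_iff h01.ne' h11.ne']
    linarith
  · field_simp
    linarith
  · field_simp

theorem stmt_4_general (μ : Fin 2 → Fin 2 → ℝ) (lam : Fin 2 → ℝ)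
    (hμ : ∀ i k, 0 < μ i k)
    (ξ₁ ξ₂ : Fin 2 → Fin 2 → ℝ)
    (hR₁ : ∀ i, μ i 0 * ξ₁ i 0 + μ i 1 * ξ₁ i 1 = lam i)
    (hR₂ : ∀ i, μ i 0 * ξ₂ i 0 + μ i 1 * ξ₂ i 1 = lam i)
    (hG₁ : ∀ k, ξ₁ 0 k + ξ₁ 1 k = 1)
    (hG₂ : ∀ k, ξ₂ 0 k + ξ₂ 1 k = 1)
    (hne : ξ₁ ≠ ξ₂) :
    μ 0 0 / μ 0 1 = μ 1 0 / μ 1 1 ∧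
      ∃ c : ℝ, 0 < c ∧ μ 1 0 = c * μ 0 0 ∧ μ 1 1 = c * μ 0 1 := by
  have hdet : (Matrix.of μ).det = 0 :=
    Matrix.exists_mulVec_eq_zero_iff.mp
      ⟨_, sub_apply_zero_ne_zero hG₁ hG₂ hne, mulVec_sub_apply_zero_eq_zero hR₁ hR₂ hG₁ hG₂⟩
  exact decomposable_of_det_eq_zero (hμ 0 1) (hμ 1 1) hdet

/-- In a 2-class 2-server system with all four activities, existence of two distinct
fully loaded feasible allocations forces decomposability of the service rates. -/
theorem stmt_4 (μ : Fin 2 → Fin 2 → ℝ) (lam : Fin 2 → ℝ)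
    (hμ : ∀ i k, 0 < μ i k) (hlam : ∀ i, 0 < lam i)
    (ξ₁ ξ₂ : Fin 2 → Fin 2 → ℝ)
    (hξ₁0 : ∀ i k, 0 ≤ ξ₁ i k) (hξ₂0 : ∀ i k, 0 ≤ ξ₂ i k)
    (hR₁ : ∀ i, μ i 0 * ξ₁ i 0 + μ i 1 * ξ₁ i 1 = lam i)
    (hR₂ : ∀ i, μ i 0 * ξ₂ i 0 + μ i 1 * ξ₂ i 1 = lam i)
    (hG₁ : ∀ k, ξ₁ 0 k + ξ₁ 1 k = 1)
    (hG₂ : ∀ k, ξ₂ 0 k + ξ₂ 1 k = 1)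
    (hne : ξ₁ ≠ ξ₂) :
    μ 0 0 / μ 0 1 = μ 1 0 / μ 1 1 ∧
      ∃ c : ℝ, 0 < c ∧ μ 1 0 = c * μ 0 0 ∧ μ 1 1 = c * μ 0 1 :=
  stmt_4_general μ lam hμ ξ₁ ξ₂ hR₁ hR₂ hG₁ hG₂ hne
end

section
/- The Skorokhod map on the half line satisfies the minimality property: if ψ ∈ D_ℝ[0,∞), η is a nonnegative nondecreasing càdlàg function, and φ = ψ + η satisfies φ(t) ≥ 0 for all t, then φ(t) ≥ Γ₁[ψ](t) for all t, where Γ₁[ψ](t) = ψ(t) + sup_{0 ≤ s ≤ t} ψ(s)⁻. -/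
open Set

theorem sSup_negPart_image_Icc_le {ψ η : ℝ → ℝ} {a t : ℝ} (hat : a ≤ t) (hηt : 0 ≤ η t)
    (hη : ∀ s ∈ Icc a t, η s ≤ η t) (hφ : ∀ s ∈ Icc a t, 0 ≤ ψ s + η s) :
    sSup ((fun s => max (-ψ s) 0) '' Icc a t) ≤ η t := by
  refine csSup_le ((nonempty_Icc.2 hat).image _) ?_
  rintro _ ⟨s, hs, rfl⟩
  have hψs : -ψ s ≤ η t := by linarith [hφ s hs, hη s hs]
  exact max_le hψs hηt

theorem stmt_12_general (ψ η : ℝ → ℝ)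
    (hη0 : ∀ t, 0 ≤ t → 0 ≤ η t)
    (hηmono : ∀ s t, 0 ≤ s → s ≤ t → η s ≤ η t)
    (hφ : ∀ t, 0 ≤ t → 0 ≤ ψ t + η t) :
    ∀ t, 0 ≤ t →
      ψ t + sSup ((fun s => max (-ψ s) 0) '' Set.Icc 0 t) ≤ ψ t + η t := by
  intro t ht
  gcongr
  exact sSup_negPart_image_Icc_le ht (hη0 t ht) (fun s hs => hηmono s t hs.1 hs.2)
    (fun s hs => hφ s hs.1)

/-- Minimality of the Skorokhod map on the half line: if φ = ψ + η ≥ 0 with η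
nonnegative nondecreasing (and ψ, η càdlàg), then φ(t) ≥ Γ₁[ψ](t) for all t ≥ 0. -/
theorem stmt_12 (ψ η : ℝ → ℝ)
    (hψrc : ∀ t, ContinuousWithinAt ψ (Set.Ici t) t)
    (hηrc : ∀ t, ContinuousWithinAt η (Set.Ici t) t)
    (hη0 : ∀ t, 0 ≤ t → 0 ≤ η t)
    (hηmono : ∀ s t, 0 ≤ s → s ≤ t → η s ≤ η t)
    (hφ : ∀ t, 0 ≤ t → 0 ≤ ψ t + η t) :
    ∀ t, 0 ≤ t →
      ψ t + sSup ((fun s => max (-ψ s) 0) '' Set.Icc 0 t) ≤ ψ t + η t :=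
  stmt_12_general ψ η hη0 hηmono hφ
end

section
/- Let Z, Z̃ be reflections of z + K and K respectively through the Skorokhod map on the half line, where K ∈ C_ℝ[0,∞) with K(0)=0 and z ≥ 0: (Z, L) = Γ[z + K], (Z̃, L̃) = Γ[K]. Then 0 ≤ Z(t) − Z̃(t) ≤ z for all t, and Z(t) = Z̃(t) for all t ≥ τ, where τ = inf{t : K(t) = −z}. -/
/-!
Since `z ≥ 0`, `(-(z + k))⁺ = ((-k)⁺ - z)⁺` pointwise, and `x ↦ (x - z)⁺` is monotone and continuous,
so it commutes with the running supremum: `L = (L̃ - z)⁺`. Hence `Z - Z̃ = z + L - L̃ = (z - L̃)⁺`,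
which lies in `[0, z]` because `L̃ ≥ 0`, and vanishes as soon as `L̃ ≥ z`, i.e. once `K` has reached `-z`.
-/

open Set

lemma max_neg_add_eq_max_sub (k : ℝ) {z : ℝ} (hz : 0 ≤ z) :
    max (-(z + k)) 0 = max (max (-k) 0 - z) 0 := by
  rcases le_total (-k) 0 with hk | hk
  · rw [max_eq_right hk, max_eq_right (by linarith), max_eq_right (by linarith)]
  · rw [max_eq_left hk, neg_add, neg_add_eq_sub]

lemma csSup_image_max_sub {α : Type*} {g : α → ℝ} {s : Set α} (hs : s.Nonempty)
    (hg : BddAbove (g '' s)) (z : ℝ) :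
    sSup ((fun x => max (g x - z) 0) '' s) = max (sSup (g '' s) - z) 0 := by
  have hmono : Monotone fun y : ℝ => max (y - z) 0 := fun a b hab => by
    simp only; gcongr
  rw [(hmono.map_csSup_of_continuousAt (by fun_prop) (hs.image g) hg), image_image]

lemma csSup_image_max_zero_nonneg {α : Type*} {g : α → ℝ} {s : Set α} (hs : s.Nonempty)
    (hg : BddAbove ((fun x => max (g x) 0) '' s)) :
    0 ≤ sSup ((fun x => max (g x) 0) '' s) :=
  let ⟨x, hx⟩ := hs
  (le_max_right (g x) 0).trans (le_csSup hg (mem_image_of_mem _ hx))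

theorem stmt_18_general (K : ℝ → ℝ) (hK : Continuous K)
    (z : ℝ) (hz : 0 ≤ z)
    (Z Zt L Lt : ℝ → ℝ)
    (hL : ∀ t, L t = sSup ((fun s => max (-(z + K s)) 0) '' Set.Icc 0 t))
    (hLt : ∀ t, Lt t = sSup ((fun s => max (-K s) 0) '' Set.Icc 0 t))
    (hZ : ∀ t, Z t = z + K t + L t)
    (hZt : ∀ t, Zt t = K t + Lt t) :
    (∀ t, 0 ≤ t → 0 ≤ Z t - Zt t ∧ Z t - Zt t ≤ z) ∧
    (∀ r t, 0 ≤ r → K r = -z → r ≤ t → Z t = Zt t) := by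
  have hbdd (t : ℝ) : BddAbove ((fun s => max (-K s) 0) '' Icc 0 t) :=
    (isCompact_Icc.image (by fun_prop)).bddAbove
  have hne {t : ℝ} (ht : 0 ≤ t) : (Icc 0 t).Nonempty := nonempty_Icc.2 ht
  have hLt_nonneg {t : ℝ} (ht : 0 ≤ t) : 0 ≤ Lt t :=
    hLt t ▸ csSup_image_max_zero_nonneg (hne ht) (hbdd t)
  have hdiff {t : ℝ} (ht : 0 ≤ t) : Z t - Zt t = max (z - Lt t) 0 := by
    have hL_eq : L t = max (Lt t - z) 0 := by
      simp only [hL, hLt, max_neg_add_eq_max_sub _ hz]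
      exact csSup_image_max_sub (hne ht) (hbdd t) z
    rw [hZ, hZt, hL_eq]
    rcases le_total (Lt t) z with h | h
    · rw [max_eq_right (by linarith), max_eq_left (by linarith)]; ring
    · rw [max_eq_left (by linarith), max_eq_right (by linarith)]; ring
  refine ⟨fun t ht => ?_, fun r t hr hKr hrt => ?_⟩
  · rw [hdiff ht]
    exact ⟨le_max_right _ _, max_le (by linarith [hLt_nonneg ht]) hz⟩
  · have hz_le : z ≤ Lt t := by
      rw [hLt]
      calc z = max (-K r) 0 := by rw [hKr, neg_neg, max_eq_left hz]
        _ ≤ _ := le_csSup (hbdd t) (mem_image_of_mem _ ⟨hr, hrt⟩)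
    have := hdiff (hr.trans hrt)
    rw [max_eq_right (by linarith)] at this
    linarith

/-- Comparison of Skorokhod reflections of z + K and K: 0 ≤ Z − Z̃ ≤ z everywhere on
[0,∞), and Z = Z̃ from the first time K hits −z onwards. -/
theorem stmt_18 (K : ℝ → ℝ) (hK : Continuous K) (hK0 : K 0 = 0)
    (z : ℝ) (hz : 0 ≤ z)
    (Z Zt L Lt : ℝ → ℝ)
    (hL : ∀ t, L t = sSup ((fun s => max (-(z + K s)) 0) '' Set.Icc 0 t))
    (hLt : ∀ t, Lt t = sSup ((fun s => max (-K s) 0) '' Set.Icc 0 t))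
    (hZ : ∀ t, Z t = z + K t + L t)
    (hZt : ∀ t, Zt t = K t + Lt t) :
    (∀ t, 0 ≤ t → 0 ≤ Z t - Zt t ∧ Z t - Zt t ≤ z) ∧
    (∀ r t, 0 ≤ r → K r = -z → r ≤ t → Z t = Zt t) :=
  stmt_18_general K hK z hz Z Zt L Lt hL hLt hZ hZt
end
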